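/- Let Π ∈ 𝕊^{q+r} satisfy Π22 ≤ 0, Π11 − Π12 Π22† Π21 ≥ 0, ker Π22 ⊆ ker Π12, and let W ∈ ℝ^{q×p}. If Π22 is nonsingular, then { Z W : Z ∈ Z_r(Π) } = Z_r(Π_W), where Π_W = diag(Wᵀ, I_r) Π diag(W, I_r). -/

import Mathlib

open Matrix


lemma exists_pinv {n : ℕ} {G : Matrix (Fin n) (Fin n) ℝ} (hG : G.IsHermitian) :
    ∃ Pi : Matrix (Fin n) (Fin n) ℝ, Piᵀ = Pi ∧ G * Pi = Pi * G ∧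
      (G * Pi) * (G * Pi) = G * Pi ∧ (G * Pi)ᵀ = G * Pi ∧ (G * Pi) * G = G ∧
      (1 - G * Pi).PosSemidef := by
  set U : Matrix (Fin n) (Fin n) ℝ := (hG.eigenvectorUnitary : Matrix (Fin n) (Fin n) ℝ) with hU
  set d : Fin n → ℝ := hG.eigenvalues with hd
  have hsU : star U * U = 1 := Matrix.UnitaryGroup.star_mul_self hG.eigenvectorUnitary
  have hUs : U * star U = 1 := Matrix.mem_unitaryGroup_iff.mp hG.eigenvectorUnitary.2
  have hGspec : G = U * diagonal d * star U := by
    have := hG.spectral_theorem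
    rwa [RCLike.ofReal_real_eq_id, Function.id_comp] at this
  have key : ∀ g g' : Fin n → ℝ, (U * diagonal g * star U) * (U * diagonal g' * star U)
      = U * diagonal (fun i => g i * g' i) * star U := by
    intro g g'
    have : diagonal g * diagonal g' = diagonal (fun i => g i * g' i) := by
      rw [diagonal_mul_diagonal]
    calc (U * diagonal g * star U) * (U * diagonal g' * star U)
        = U * (diagonal g * ((star U * U) * diagonal g')) * star U := by
          simp only [Matrix.mul_assoc]
      _ = U * diagonal (fun i => g i * g' i) * star U := by
          rw [hsU, Matrix.one_mul, this]
  have htr : ∀ g : Fin n → ℝ, (U * diagonal g * star U)ᵀ = U * diagonal g * star U := by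
    intro g
    have h1 : star U = Uᵀ := Matrix.conjTranspose_eq_transpose_of_trivial U
    rw [Matrix.transpose_mul, Matrix.transpose_mul, h1, Matrix.transpose_transpose,
      diagonal_transpose, Matrix.mul_assoc]
  set f : Fin n → ℝ := fun i => if d i = 0 then 0 else (d i)⁻¹ with hf
  set e : Fin n → ℝ := fun i => if d i = 0 then 0 else 1 with he
  have hdf : (fun i => d i * f i) = e := by
    funext i; simp only [hf, he]
    by_cases h : d i = 0
    · simp [h]
    · simp [h, mul_inv_cancel₀ h]
  have hfd : (fun i => f i * d i) = e := by
    funext i; simp only [hf, he]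
    by_cases h : d i = 0
    · simp [h]
    · simp [h, inv_mul_cancel₀ h]
  have hee : (fun i => e i * e i) = e := by
    funext i; simp only [he]; by_cases h : d i = 0 <;> simp [h]
  have hed : (fun i => e i * d i) = d := by
    funext i; simp only [he]; by_cases h : d i = 0 <;> simp [h]
  refine ⟨U * diagonal f * star U, htr f, ?_, ?_, ?_, ?_, ?_⟩
  · rw [hGspec, key, key, hdf, hfd]
  · rw [hGspec, key, hdf, key, hee]
  · rw [hGspec, key, hdf, htr]
  · rw [hGspec, key, hdf, key, hed]
  · rw [hGspec, key, hdf]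
    have h1 : (1 : Matrix (Fin n) (Fin n) ℝ) - U * diagonal e * star U
        = U * diagonal (fun i => 1 - e i) * star U := by
      have : diagonal (fun i => (1:ℝ) - e i) = 1 - diagonal e := by
        rw [← diagonal_one, diagonal_sub]
      rw [this, Matrix.mul_sub, Matrix.sub_mul, Matrix.mul_one, hUs]
    rw [h1]
    have hpos : (diagonal (fun i => (1:ℝ) - e i)).PosSemidef := by
      apply Matrix.PosSemidef.diagonal
      intro i; simp only [he]; by_cases h : d i = 0 <;> simp [h]
    have := hpos.mul_mul_conjTranspose_same U
    rwa [← Matrix.star_eq_conjTranspose] at this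

lemma douglas {p q r : ℕ} (A : Matrix (Fin q) (Fin p) ℝ) (B : Matrix (Fin r) (Fin p) ℝ)
    (h : (Aᵀ * A - Bᵀ * B).PosSemidef) :
    ∃ K : Matrix (Fin r) (Fin q) ℝ, K * A = B ∧ (1 - Kᵀ * K).PosSemidef := by
  have hct : ∀ {a b : ℕ} (M : Matrix (Fin a) (Fin b) ℝ), Mᴴ = Mᵀ :=
    fun M => Matrix.conjTranspose_eq_transpose_of_trivial M
  have hG : (A * Aᵀ).IsHermitian := by
    have := Matrix.isHermitian_mul_conjTranspose_self A
    rwa [hct] at this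
  obtain ⟨Pinv, hPit, hcomm, hPP, hPt, hPG, hpsd⟩ := exists_pinv hG
  set G := A * Aᵀ with hGdef
  set P := G * Pinv with hPdef
  -- P * A = A
  have hoppG : (1 - P) * G = 0 := by
    rw [Matrix.sub_mul, Matrix.one_mul, hPG, sub_self]
  have hPA : P * A = A := by
    have h0 : ((1 - P) * A) * ((1 - P) * A)ᵀ = 0 := by
      have h1 : (1 - P)ᵀ = 1 - P := by rw [Matrix.transpose_sub, Matrix.transpose_one, hPt]
      rw [Matrix.transpose_mul, h1]
      rw [show ((1 - P) * A) * (Aᵀ * (1 - P)) = ((1 - P) * (A * Aᵀ)) * (1 - P) from by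
        simp only [Matrix.mul_assoc]]
      rw [← hGdef, hoppG, Matrix.zero_mul]
    have h2 : (1 - P) * A = 0 := by
      have := Matrix.self_mul_conjTranspose_eq_zero (A := (1 - P) * A)
      rw [hct] at this
      exact this.mp h0
    rw [Matrix.sub_mul, Matrix.one_mul, sub_eq_zero] at h2
    exact h2.symm
  -- kernel containment
  have hkerB : ∀ {s : ℕ} (C : Matrix (Fin p) (Fin s) ℝ), A * C = 0 → B * C = 0 := by
    intro s C hAC
    have hconj : (Cᵀ * (Aᵀ * A - Bᵀ * B) * C).PosSemidef := by
      have := h.conjTranspose_mul_mul_same C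
      rwa [hct] at this
    have hval : Cᵀ * (Aᵀ * A - Bᵀ * B) * C = -((B * C)ᵀ * (B * C)) := by
      rw [Matrix.mul_sub, Matrix.sub_mul]
      have e1 : Cᵀ * (Aᵀ * A) * C = 0 := by
        rw [Matrix.mul_assoc, Matrix.mul_assoc, hAC, Matrix.mul_zero, Matrix.mul_zero]
      have e2 : Cᵀ * (Bᵀ * B) * C = (B * C)ᵀ * (B * C) := by
        rw [Matrix.transpose_mul]; simp only [Matrix.mul_assoc]
      rw [e1, e2, zero_sub]
    rw [hval] at hconj
    set Xm := (B * C)ᵀ * (B * C) with hXm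
    have hjj : ∀ j, Xm j j ≤ 0 := by
      intro j
      have h3 := hconj.dotProduct_mulVec_nonneg (Pi.single j 1)
      have h4 : star (Pi.single j (1:ℝ)) ⬝ᵥ (-Xm) *ᵥ Pi.single j 1 = -Xm j j := by
        simp [Matrix.mulVec_single, dotProduct, Pi.single_apply]
      rw [h4] at h3
      linarith
    ext i j
    have h5 : Xm j j = ∑ i, ((B * C) i j) ^ 2 := by
      simp [hXm, Matrix.mul_apply, sq, mul_comm]
    have h6 : ∀ i ∈ Finset.univ, (0:ℝ) ≤ ((B * C) i j) ^ 2 := fun i _ => sq_nonneg _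
    have h7 : ∑ i, ((B * C) i j) ^ 2 = 0 :=
      le_antisymm (h5 ▸ hjj j) (Finset.sum_nonneg h6)
    have h8 := (Finset.sum_eq_zero_iff_of_nonneg h6).mp h7 i (Finset.mem_univ i)
    simpa using pow_eq_zero_iff (n := 2) (by norm_num) |>.mp h8
  -- the contraction
  refine ⟨B * (Aᵀ * Pinv), ?_, ?_⟩
  · have hAC : A * ((Aᵀ * Pinv) * A - 1) = 0 := by
      rw [Matrix.mul_sub, Matrix.mul_one, sub_eq_zero]
      rw [show A * (Aᵀ * Pinv * A) = (G * Pinv) * A from by simp only [Matrix.mul_assoc, hGdef]]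
      exact hPA
    have := hkerB _ hAC
    rw [Matrix.mul_sub, Matrix.mul_one, sub_eq_zero] at this
    simp only [Matrix.mul_assoc] at this ⊢
    exact this
  · have hconj2 : ((Aᵀ * Pinv)ᵀ * (Aᵀ * A - Bᵀ * B) * (Aᵀ * Pinv)).PosSemidef := by
      have := h.conjTranspose_mul_mul_same (Aᵀ * Pinv)
      rwa [hct] at this
    have hmid : (Aᵀ * Pinv)ᵀ * (Aᵀ * A - Bᵀ * B) * (Aᵀ * Pinv)
        = P - (B * (Aᵀ * Pinv))ᵀ * (B * (Aᵀ * Pinv)) := by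
      rw [Matrix.mul_sub, Matrix.sub_mul]
      congr 1
      · have e3 : (Aᵀ * Pinv)ᵀ * (Aᵀ * A) * (Aᵀ * Pinv) = (Pinv * G) * (G * Pinv) := by
          rw [Matrix.transpose_mul, Matrix.transpose_transpose, hPit, hGdef]
          simp only [Matrix.mul_assoc]
        rw [e3, ← hcomm, ← hPdef, hPP]
      · simp only [Matrix.transpose_mul, Matrix.transpose_transpose, hPit, Matrix.mul_assoc]
    have hfin : 1 - (B * (Aᵀ * Pinv))ᵀ * (B * (Aᵀ * Pinv))
        = (1 - P) + (Aᵀ * Pinv)ᵀ * (Aᵀ * A - Bᵀ * B) * (Aᵀ * Pinv) := by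
      rw [hmid]; abel
    rw [hfin]
    exact hpsd.add hconj2

lemma quadform {q' r : ℕ} (M11 : Matrix (Fin q') (Fin q') ℝ) (M12 : Matrix (Fin q') (Fin r) ℝ)
    (M21 : Matrix (Fin r) (Fin q') ℝ) (M22 : Matrix (Fin r) (Fin r) ℝ)
    (Z : Matrix (Fin r) (Fin q') ℝ) :
    (fromRows (1 : Matrix (Fin q') (Fin q') ℝ) Z)ᵀ * fromBlocks M11 M12 M21 M22 *
        fromRows (1 : Matrix (Fin q') (Fin q') ℝ) Z
      = M11 + Zᵀ * M21 + (M12 * Z + Zᵀ * (M22 * Z)) := by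
  rw [transpose_fromRows, transpose_one, fromCols_mul_fromBlocks, fromCols_mul_fromRows]
  simp only [Matrix.one_mul, Matrix.mul_one, Matrix.add_mul, Matrix.mul_assoc]

lemma completion {q' r : ℕ} (Q11 : Matrix (Fin q') (Fin q') ℝ) (Q12 : Matrix (Fin q') (Fin r) ℝ)
    (P22 X : Matrix (Fin r) (Fin r) ℝ) (hXt : Xᵀ = X) (hPX : P22 * X = 1) (hXP : X * P22 = 1)
    (Z : Matrix (Fin r) (Fin q') ℝ) :
    Q11 + Zᵀ * Q12ᵀ + (Q12 * Z + Zᵀ * (P22 * Z))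
      = (Q11 - Q12 * X * Q12ᵀ) + (Z + X * Q12ᵀ)ᵀ * P22 * (Z + X * Q12ᵀ) := by
  have hPXa : ∀ {s : ℕ} (C : Matrix (Fin r) (Fin s) ℝ), P22 * (X * C) = C := by
    intro s C; rw [← Matrix.mul_assoc, hPX, Matrix.one_mul]
  have hXPa : ∀ {s : ℕ} (C : Matrix (Fin r) (Fin s) ℝ), X * (P22 * C) = C := by
    intro s C; rw [← Matrix.mul_assoc, hXP, Matrix.one_mul]
  simp only [Matrix.transpose_add, Matrix.transpose_mul, Matrix.transpose_transpose, hXt,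
    Matrix.add_mul, Matrix.mul_add, Matrix.sub_mul, Matrix.mul_sub, Matrix.mul_assoc, hPXa, hXPa]
  abel

/-- The four Penrose conditions: `X` is the Moore–Penrose pseudoinverse of `A`. -/
def IsMoorePenrose {r : ℕ} (A X : Matrix (Fin r) (Fin r) ℝ) : Prop :=
  A * X * A = A ∧ X * A * X = X ∧ (A * X)ᵀ = A * X ∧ (X * A)ᵀ = X * A

/-- The set `Z_r(Π)` of matrices `Z` with `[I; Z]ᵀ Π [I; Z] ≥ 0`. -/
def Zset {q r : ℕ} (Pm : Matrix (Fin q ⊕ Fin r) (Fin q ⊕ Fin r) ℝ) :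
    Set (Matrix (Fin r) (Fin q) ℝ) :=
  {Z | ((fromRows (1 : Matrix (Fin q) (Fin q) ℝ) Z)ᵀ * Pm *
        fromRows (1 : Matrix (Fin q) (Fin q) ℝ) Z).PosSemidef}

theorem stmt6 {q r p : ℕ}
    (P11 : Matrix (Fin q) (Fin q) ℝ) (P12 : Matrix (Fin q) (Fin r) ℝ)
    (P22 X : Matrix (Fin r) (Fin r) ℝ) (W : Matrix (Fin q) (Fin p) ℝ)
    (h11 : P11.IsSymm) (h22 : P22.IsSymm)
    (hX : IsMoorePenrose P22 X)
    (h22neg : (-P22).PosSemidef)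
    (hSchur : (P11 - P12 * X * P12ᵀ).PosSemidef)
    (hker : ∀ x : Fin r → ℝ, P22.mulVec x = 0 → P12.mulVec x = 0)
    (h22inv : IsUnit P22) :
    (fun Z : Matrix (Fin r) (Fin q) ℝ => Z * W) '' Zset (fromBlocks P11 P12 P12ᵀ P22)
      = Zset (fromBlocks (Wᵀ * P11 * W) (Wᵀ * P12) (P12ᵀ * W) P22) := by
  have hct : ∀ {a b : ℕ} (M : Matrix (Fin a) (Fin b) ℝ), Mᴴ = Mᵀ :=
    fun M => Matrix.conjTranspose_eq_transpose_of_trivial M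
  have hdet : IsUnit P22.det := (Matrix.isUnit_iff_isUnit_det P22).mp h22inv
  have hXeq : X = P22⁻¹ := by
    have h1 := hX.1
    calc X = 1 * X * 1 := by rw [Matrix.one_mul, Matrix.mul_one]
      _ = (P22⁻¹ * P22) * X * (P22 * P22⁻¹) := by
          rw [Matrix.nonsing_inv_mul _ hdet, Matrix.mul_nonsing_inv _ hdet]
      _ = P22⁻¹ * (P22 * X * P22) * P22⁻¹ := by simp only [Matrix.mul_assoc]
      _ = P22⁻¹ * P22 * P22⁻¹ := by rw [h1]
      _ = P22⁻¹ := by rw [Matrix.nonsing_inv_mul _ hdet, Matrix.one_mul]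
  have hPX : P22 * X = 1 := by rw [hXeq]; exact Matrix.mul_nonsing_inv _ hdet
  have hXP : X * P22 = 1 := by rw [hXeq]; exact Matrix.nonsing_inv_mul _ hdet
  have hXt : Xᵀ = X := by
    rw [hXeq, Matrix.transpose_nonsing_inv, h22.eq]
  -- square roots
  set S := P11 - P12 * X * P12ᵀ with hSdef
  open scoped MatrixOrder in
  set M := CFC.sqrt S with hMdef
  open scoped MatrixOrder in
  have hMM : M * M = S := CFC.sqrt_mul_sqrt_self S hSchur.nonneg
  have hMt : Mᵀ = M := by
    open scoped MatrixOrder in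
    have := (CFC.sqrt_nonneg S).posSemidef.isHermitian.eq
    rwa [hct] at this
  open scoped MatrixOrder in
  set L := CFC.sqrt (-P22) with hLdef
  open scoped MatrixOrder in
  have hLL : L * L = -P22 := CFC.sqrt_mul_sqrt_self (-P22) h22neg.nonneg
  have hLt : Lᵀ = L := by
    open scoped MatrixOrder in
    have := (CFC.sqrt_nonneg (-P22)).posSemidef.isHermitian.eq
    rwa [hct] at this
  have hLdet : IsUnit L.det := by
    have h1 : L.det * L.det = (-P22).det := by rw [← Matrix.det_mul, hLL]
    have h2 : IsUnit (-P22).det := by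
      rw [show -P22 = (-1 : ℝ) • P22 from by simp, Matrix.det_smul]
      exact (IsUnit.pow _ (isUnit_one.neg)).mul hdet
    rw [← h1] at h2
    exact isUnit_of_mul_isUnit_left h2
  have hLinv : L⁻¹ * L = 1 := Matrix.nonsing_inv_mul _ hLdet
  have hLinvt : L⁻¹ᵀ = L⁻¹ := by rw [Matrix.transpose_nonsing_inv, hLt]
  have hLPL : L⁻¹ * P22 * L⁻¹ = -1 := by
    have : P22 = -(L * L) := by rw [hLL, neg_neg]
    rw [this]
    rw [show L⁻¹ * -(L * L) * L⁻¹ = -((L⁻¹ * L) * (L * L⁻¹)) from by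
      simp only [Matrix.mul_assoc, Matrix.neg_mul, Matrix.mul_neg]]
    rw [hLinv, Matrix.mul_nonsing_inv _ hLdet, Matrix.one_mul]
  ext Y
  simp only [Set.mem_image, Zset, Set.mem_setOf_eq, quadform]
  constructor
  · rintro ⟨Z, hZ, rfl⟩
    have key : Wᵀ * P11 * W + (Z * W)ᵀ * (P12ᵀ * W) + (Wᵀ * P12 * (Z * W) + (Z * W)ᵀ * (P22 * (Z * W)))
        = Wᵀ * (P11 + Zᵀ * P12ᵀ + (P12 * Z + Zᵀ * (P22 * Z))) * W := by
      simp only [Matrix.transpose_mul, Matrix.mul_add, Matrix.add_mul, Matrix.mul_assoc]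
    rw [key]
    have := hZ.conjTranspose_mul_mul_same W
    rwa [hct] at this
  · intro hY
    set V := Y + X * (P12ᵀ * W) with hVdef
    have hformY : Wᵀ * P11 * W + Yᵀ * (P12ᵀ * W) + (Wᵀ * P12 * Y + Yᵀ * (P22 * Y))
        = Wᵀ * S * W + Vᵀ * P22 * V := by
      have := completion (Wᵀ * P11 * W) (Wᵀ * P12) P22 X hXt hPX hXP Y
      rw [Matrix.transpose_mul, Matrix.transpose_transpose] at this
      rw [this, hVdef, hSdef]
      congr 1
      simp only [Matrix.mul_sub, Matrix.sub_mul, Matrix.mul_assoc]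
    rw [hformY] at hY
    have hdo : ((M * W)ᵀ * (M * W) - (L * V)ᵀ * (L * V)).PosSemidef := by
      have e1 : (M * W)ᵀ * (M * W) = Wᵀ * S * W := by
        have : (M * W)ᵀ * (M * W) = Wᵀ * (M * M) * W := by
          rw [Matrix.transpose_mul, hMt]; simp only [Matrix.mul_assoc]
        rw [this, hMM]
      have e2 : (L * V)ᵀ * (L * V) = -(Vᵀ * P22 * V) := by
        have : (L * V)ᵀ * (L * V) = Vᵀ * (L * L) * V := by
          rw [Matrix.transpose_mul, hLt]; simp only [Matrix.mul_assoc]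
        rw [this, hLL]
        simp only [Matrix.neg_mul, Matrix.mul_neg]
      rw [e1, e2, sub_neg_eq_add]
      exact hY
    obtain ⟨K, hKA, hKc⟩ := douglas (M * W) (L * V) hdo
    refine ⟨L⁻¹ * (K * M) - X * P12ᵀ, ?_, ?_⟩
    · -- membership in Zset
      rw [completion P11 P12 P22 X hXt hPX hXP _]
      have hU : L⁻¹ * (K * M) - X * P12ᵀ + X * P12ᵀ = L⁻¹ * (K * M) := by abel
      rw [hU]
      have e3 : (L⁻¹ * (K * M))ᵀ * P22 * (L⁻¹ * (K * M))
          = -((K * M)ᵀ * (K * M)) := by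
        rw [Matrix.transpose_mul, hLinvt]
        rw [show (K * M)ᵀ * L⁻¹ * P22 * (L⁻¹ * (K * M))
            = (K * M)ᵀ * ((L⁻¹ * P22 * L⁻¹) * (K * M)) from by simp only [Matrix.mul_assoc]]
        rw [hLPL]
        simp only [Matrix.neg_mul, Matrix.mul_neg, Matrix.one_mul]
      rw [e3]
      have e4 : S + -((K * M)ᵀ * (K * M)) = Mᵀ * (1 - Kᵀ * K) * M := by
        rw [Matrix.mul_sub, Matrix.sub_mul, Matrix.mul_one, hMt, hMM, Matrix.transpose_mul, hMt]
        simp only [Matrix.mul_assoc]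
        abel
      rw [e4]
      have := hKc.conjTranspose_mul_mul_same M
      rwa [hct] at this
    · -- Z * W = Y
      rw [Matrix.sub_mul]
      rw [show L⁻¹ * (K * M) * W = L⁻¹ * (K * (M * W)) from by simp only [Matrix.mul_assoc]]
      rw [hKA, ← Matrix.mul_assoc, hLinv, Matrix.one_mul, hVdef, Matrix.mul_assoc]
      abel
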